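/- arXiv:2012.02183 — 2 statements merged into one kernel-verified Lean document; each statement's English description precedes it below -/
import Mathlib

section
/- Let q ≥ 3 and n ≥ 2. If a pair (T⁺, T⁻) of disjoint subsets of V(H(n,q)) satisfies the projection definition of extended perfect bitrade (Definition 2), i.e., T⁺ and T⁻ have code distance at least 4 and every i-projection of (T⁺, T⁻) is a perfect bitrade in H(n−1,q), then it satisfies the spectral definition (Definition 4): the function f = χ_{T⁺} − χ_{T⁻} can be written as f = g + h with Ag = −n·g and Ah = (q−2)·h, where A is the adjacency operator of H(n,q). -/
open Finset

/-- Vertex set of the Hamming graph `H(n,q)`: `q`-ary words of length `n`. -/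
abbrev HV (n q : ℕ) : Type := Fin n → ZMod q

/-- The radius-`r` sphere around `x` in `H(n,q)`. -/
def hSphere {n q : ℕ} (x : HV n q) (r : ℕ) : Set (HV n q) := {y | hammingDist x y = r}

/-- The radius-1 ball around `x` in `H(n,q)`. -/
def hBall {n q : ℕ} (x : HV n q) : Set (HV n q) := {z | hammingDist x z ≤ 1}

/-- A code `C` has code distance at least `d`. -/
def minDistGe {n q : ℕ} (C : Set (HV n q)) (d : ℕ) : Prop :=
  ∀ x ∈ C, ∀ y ∈ C, x ≠ y → d ≤ hammingDist x y

/-- A pair of disjoint sets is a perfect bitrade in `H(n,q)` if every radius-1 ball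
meets both parts in the same number (at most 1) of vertices. -/
def isPerfectBitrade {n q : ℕ} (Tp Tm : Set (HV n q)) : Prop :=
  Disjoint Tp Tm ∧ ∀ x : HV n q,
    (hBall x ∩ Tp).ncard = (hBall x ∩ Tm).ncard ∧ (hBall x ∩ Tp).ncard ≤ 1

/-- The weight of a vertex `x` with respect to a set `A`:
`|S₀(x) ∩ A| + |S₁(x) ∩ A| + (2/n)·|S₂(x) ∩ A|`. -/
noncomputable def wt {n q : ℕ} (A : Set (HV n q)) (x : HV n q) : ℚ :=
  ((hSphere x 0 ∩ A).ncard : ℚ) + ((hSphere x 1 ∩ A).ncard : ℚ)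
    + (2 / (n : ℚ)) * ((hSphere x 2 ∩ A).ncard : ℚ)

/-- Definition 3 (weight definition of extended perfect bitrade). -/
def weightBitrade {n q : ℕ} (Tp Tm : Set (HV n q)) : Prop :=
  Disjoint Tp Tm ∧ ∀ x : HV n q, wt Tp x = wt Tm x ∧ wt Tp x ≤ 1

/-- 0-1 indicator function of a set of vertices. -/
noncomputable def chi {n q : ℕ} (T : Set (HV n q)) (x : HV n q) : ℝ :=
  Set.indicator T (fun _ => (1 : ℝ)) x

/-- The adjacency operator of `H(n,q)`: sum of `f` over the neighbours of `x`. -/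
def nbrSum {n q : ℕ} [NeZero q] {R : Type*} [AddCommMonoid R]
    (f : HV n q → R) (x : HV n q) : R :=
  ∑ y ∈ Finset.univ.filter (fun y => hammingDist x y = 1), f y

/-- The `i`-projection of a code `C ⊆ V(H(m+1,q))`. -/
def proj {m q : ℕ} (i : Fin (m + 1)) (C : Set (HV (m + 1) q)) : Set (HV m q) :=
  {x | ∃ a : ZMod q, i.insertNth a x ∈ C}

/-- Definition 2 (projection definition of extended perfect bitrade). -/
def projBitrade {m q : ℕ} (Tp Tm : Set (HV (m + 1) q)) : Prop :=
  minDistGe Tp 4 ∧ minDistGe Tm 4 ∧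
    ∀ i : Fin (m + 1),
      isPerfectBitrade (proj i Tp \ proj i Tm) (proj i Tm \ proj i Tp)

/-- `f *ᵢ ψ`, where `ψ ≡ 1`: the function `x ↦ ∑ₐ f(xᵃᵢ)` on `H(m,q)`. -/
noncomputable def projFun {m q : ℕ} [NeZero q] (i : Fin (m + 1)) (f : HV (m + 1) q → ℂ)
    (x : HV m q) : ℂ :=
  ∑ a : ZMod q, f (i.insertNth a x)

/-- The cylinder `C_{x,i} = ⋃ₐ B(x + a·eᵢ)`. -/
def cylinder {n q : ℕ} (x : HV n q) (i : Fin n) : Set (HV n q) :=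
  ⋃ a : ZMod q, hBall (Function.update x i (x i + a))

/-- Definition 5 (cylinder definition of extended perfect bitrade). -/
def cylBitrade {n q : ℕ} (Tp Tm : Set (HV n q)) : Prop :=
  ∀ (x : HV n q) (i : Fin n),
    (cylinder x i ∩ Tp).ncard = (cylinder x i ∩ Tm).ncard ∧
      (cylinder x i ∩ Tp).ncard ≤ 1

/-- The matrix `S` from Definition 1. -/
noncomputable def Smat (n q : ℕ) : Matrix (Fin 3) (Fin 3) ℝ :=
  !![0, (n : ℝ) * ((q : ℝ) - 1), 0;
     1, (q : ℝ) - 2, ((n : ℝ) - 1) * ((q : ℝ) - 1);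
     0, (n : ℝ), (n : ℝ) * ((q : ℝ) - 2)]

/-- Definition 1 (matrix definition of extended perfect bitrade), existence of the
matrix `F` with the required properties. -/
def matrixBitrade {n q : ℕ} [NeZero q] (Tp Tm : Set (HV n q)) : Prop :=
  ∃ F : HV n q → Fin 3 → ℝ,
    (∀ x, F x 0 = chi Tp x - chi Tm x) ∧
    (∀ x, ∑ k : Fin 3, F x k = 0) ∧
    (∀ x, ({k : Fin 3 | F x k ≠ 0}).ncard ≤ 2) ∧
    (∀ (x : HV n q) (j : Fin 3),
      nbrSum (fun y => F y j) x = ∑ k : Fin 3, F x k * Smat n q k j)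

/-- Definition 4 (spectral definition of extended perfect bitrade). -/
def spectralBitrade {n q : ℕ} [NeZero q] (Tp Tm : Set (HV n q)) : Prop :=
  minDistGe Tp 4 ∧ minDistGe Tm 4 ∧
    ∃ g h : HV n q → ℝ,
      (∀ x, chi Tp x - chi Tm x = g x + h x) ∧
      (∀ x, nbrSum g x = -(n : ℝ) * g x) ∧
      (∀ x, nbrSum h x = ((q : ℝ) - 2) * h x)


/-! The line sums `Lᵢ g x = ∑ₐ g (x with a in position i)` satisfy `A = ∑ᵢ Lᵢ - n`. For
`f = χ₊ - χ₋`, code distance `≥ 2` makes `Lᵢ f` the lift of the signed indicator `G` of the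
`i`-projection, and the projection being a perfect bitrade says `G + A G = 0`; lifting back gives
`A (Lᵢ f) = (q - 2) Lᵢ f`. Summing over `i`, `(A - (q - 2)) (A + n) f = 0`, and since
`-n ≠ q - 2` this splits `f` into eigenvectors for `-n` and `q - 2`. -/

open Function

theorem LinearMap.exists_add_eigenvectors {K V : Type*} [Field K] [AddCommGroup V] [Module K V]
    (T : V →ₗ[K] V) {a b : K} (hab : a ≠ b) {v : V}
    (hv : T (T v - a • v) = b • (T v - a • v)) :
    ∃ g h, v = g + h ∧ T g = a • g ∧ T h = b • h := by
  have hba : b - a ≠ 0 := sub_ne_zero.mpr hab.symm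
  set h := (b - a)⁻¹ • (T v - a • v)
  have hTh : T h = b • h := by rw [map_smul, hv, smul_comm]
  refine ⟨v - h, h, (sub_add_cancel v h).symm, ?_, hTh⟩
  have hsmul : (b - a) • h = T v - a • v := by
    simp only [h, smul_smul, mul_inv_cancel₀ hba, one_smul]
  rw [map_sub, hTh]
  linear_combination (norm := module) (-1 : K) • hsmul

section Hamming

variable {ι β : Type*} [Fintype ι] [DecidableEq ι] [DecidableEq β]

lemma hammingDist_update_of_ne {x : ι → β} {i : ι} {a : β} (ha : a ≠ x i) :
    hammingDist x (update x i a) = 1 := by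
  rw [hammingDist, Finset.card_eq_one]
  refine ⟨i, Finset.ext fun j => ?_⟩
  rcases eq_or_ne j i with rfl | hj
  · simp [Ne.symm ha]
  · simp [hj]

lemma exists_eq_update_of_hammingDist_eq_one {x y : ι → β} (h : hammingDist x y = 1) :
    ∃ i, y i ≠ x i ∧ y = update x i (y i) := by
  obtain ⟨i, hi⟩ := Finset.card_eq_one.mp h
  have hdiff : ∀ j, x j ≠ y j ↔ j = i := fun j => by simpa using Finset.ext_iff.mp hi j
  refine ⟨i, fun hxy => (hdiff i).2 rfl hxy.symm, funext fun j => ?_⟩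
  rcases eq_or_ne j i with rfl | hj
  · simp
  · simpa [hj] using (not_not.mp (mt (hdiff j).1 hj)).symm

end Hamming

section Indicators

variable {n q : ℕ}

lemma minDistGe.mono {C : Set (HV n q)} {d d' : ℕ} (hC : minDistGe C d) (hd : d' ≤ d) :
    minDistGe C d' :=
  fun x hx y hy hxy => hd.trans (hC x hx y hy hxy)

lemma sum_chi_eq_ncard (s : Finset (HV n q)) (S : Set (HV n q)) :
    ∑ w ∈ s, chi S w = ((↑s ∩ S).ncard : ℝ) := by
  classical
  simp only [chi, Set.indicator_apply, Finset.sum_boole]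
  rw [← Set.ncard_coe_finset, Finset.coe_filter]
  rfl

lemma chi_sub_chi_eq_chi_sdiff_sub (A B : Set (HV n q)) (x : HV n q) :
    chi A x - chi B x = chi (A \ B) x - chi (B \ A) x := by
  by_cases ha : x ∈ A <;> by_cases hb : x ∈ B <;> simp [chi, ha, hb]

lemma sum_chi_insertNth {m : ℕ} [NeZero q] {S : Set (HV (m + 1) q)} (hS : minDistGe S 2)
    (i : Fin (m + 1)) (z : HV m q) :
    ∑ a : ZMod q, chi S (i.insertNth a z) = chi (proj i S) z := by
  by_cases hz : z ∈ proj i S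
  · rw [chi, Set.indicator_of_mem hz]
    obtain ⟨a, ha⟩ := hz
    rw [Finset.sum_eq_single a]
    · exact Set.indicator_of_mem ha _
    · intro b _ hba
      refine Set.indicator_of_notMem (fun hb => ?_) _
      have hdist : hammingDist (i.insertNth a z : HV (m + 1) q) (i.insertNth b z) = 1 := by
        rw [← Fin.update_insertNth (α := fun _ => ZMod q) i a b z]
        exact hammingDist_update_of_ne (by simpa using hba)
      have := hS _ ha _ hb fun hab => hba (by simpa using congrFun hab i : a = b).symm
      omega
    · simp
  · rw [chi, Set.indicator_of_notMem hz]
    exact Finset.sum_eq_zero fun a _ => Set.indicator_of_notMem (fun h => hz ⟨a, h⟩) _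

end Indicators

section Operators

variable {n q : ℕ} [NeZero q]

def lineSum (i : Fin n) (g : HV n q → ℝ) (x : HV n q) : ℝ :=
  ∑ a : ZMod q, g (update x i a)

lemma nbrSum_eq_sum_sum_erase (g : HV n q → ℝ) (x : HV n q) :
    nbrSum g x = ∑ i, ∑ a ∈ univ.erase (x i), g (update x i a) := by
  rw [nbrSum, Finset.sum_sigma']
  symm
  refine Finset.sum_bij (fun p _ => update x p.1 p.2) ?_ ?_ ?_ fun _ _ => rfl
  · rintro ⟨i, a⟩ hp
    simpa using hammingDist_update_of_ne (Finset.mem_erase.mp (Finset.mem_sigma.mp hp).2).1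
  · rintro ⟨i, a⟩ hp ⟨j, b⟩ - hpq
    have ha : a ≠ x i := (Finset.mem_erase.mp (Finset.mem_sigma.mp hp).2).1
    rcases eq_or_ne i j with rfl | hij
    · simpa using congrFun hpq i
    · exact absurd (by simpa [update_of_ne hij] using congrFun hpq i) ha
  · intro y hy
    obtain ⟨i, hyi, hy⟩ := exists_eq_update_of_hammingDist_eq_one (Finset.mem_filter.mp hy).2
    refine ⟨⟨i, y i⟩, ?_, hy.symm⟩
    simpa using hyi

lemma nbrSum_eq_sum_lineSum_sub (g : HV n q → ℝ) (x : HV n q) :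
    nbrSum g x = ∑ i, lineSum i g x - n * g x := by
  have hline : ∀ i, ∑ a ∈ univ.erase (x i), g (update x i a) = lineSum i g x - g x := fun i => by
    rw [Finset.sum_erase_eq_sub (Finset.mem_univ _), update_eq_self, lineSum]
  simp [nbrSum_eq_sum_sum_erase, hline, Finset.sum_sub_distrib]

variable (n q) in
def nbrSumLinear : (HV n q → ℝ) →ₗ[ℝ] HV n q → ℝ where
  toFun := nbrSum
  map_add' _ _ := funext fun _ => Finset.sum_add_distrib
  map_smul' _ _ := funext fun _ => (Finset.mul_sum _ _ _).symm

lemma nbrSum_comp_removeNth {m : ℕ} (i : Fin (m + 1)) (G : HV m q → ℝ) (x : HV (m + 1) q) :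
    nbrSum (fun y => G (i.removeNth y)) x
      = ((q : ℝ) - 1) * G (i.removeNth x) + nbrSum G (i.removeNth x) := by
  simp only [nbrSum_eq_sum_lineSum_sub, Fin.sum_univ_succAbove _ i, lineSum,
    Fin.removeNth_update, Fin.removeNth_update_succAbove, Finset.sum_const, Finset.card_univ,
    ZMod.card, nsmul_eq_mul]
  push_cast
  ring

lemma sum_ball_eq_add_nbrSum (g : HV n q → ℝ) (z : HV n q) :
    ∑ w ∈ univ.filter (fun w => hammingDist z w ≤ 1), g w = g z + nbrSum g z := by
  have hball : univ.filter (fun w => hammingDist z w ≤ 1)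
      = insert z (univ.filter fun w => hammingDist z w = 1) := by
    ext w
    simp [Nat.le_one_iff_eq_zero_or_eq_one, eq_comm]
  rw [hball, Finset.sum_insert (by simp), nbrSum]

end Operators

section Bitrades

variable {q : ℕ} [NeZero q]

lemma isPerfectBitrade.chi_sub_add_nbrSum_eq_zero {n : ℕ} {P M : Set (HV n q)}
    (h : isPerfectBitrade P M) (z : HV n q) :
    (chi P z - chi M z) + nbrSum (fun w => chi P w - chi M w) z = 0 := by
  have hball : ∀ S : Set (HV n q),
      ∑ w ∈ univ.filter (fun w => hammingDist z w ≤ 1), chi S w = ((hBall z ∩ S).ncard : ℝ) := by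
    intro S
    rw [sum_chi_eq_ncard]
    congr 3
    ext w
    simp [hBall]
  have hsum := sum_ball_eq_add_nbrSum (fun w => chi P w - chi M w) z
  rw [Finset.sum_sub_distrib, hball, hball, (h.2 z).1, sub_self] at hsum
  exact hsum.symm

lemma projBitrade.nbrSum_lineSum {m : ℕ} {Tp Tm : Set (HV (m + 1) q)} (h : projBitrade Tp Tm)
    (i : Fin (m + 1)) (x : HV (m + 1) q) :
    nbrSum (lineSum i fun y => chi Tp y - chi Tm y) x
      = ((q : ℝ) - 2) * lineSum i (fun y => chi Tp y - chi Tm y) x := by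
  set G : HV m q → ℝ := fun z =>
    chi (proj i Tp \ proj i Tm) z - chi (proj i Tm \ proj i Tp) z
  have hlift : lineSum i (fun y => chi Tp y - chi Tm y) = fun y => G (i.removeNth y) := by
    funext y
    simp only [lineSum, G, ← Fin.insertNth_removeNth, Finset.sum_sub_distrib,
      sum_chi_insertNth (h.1.mono (by norm_num)), sum_chi_insertNth (h.2.1.mono (by norm_num))]
    exact chi_sub_chi_eq_chi_sdiff_sub _ _ _
  have hG := (h.2.2 i).chi_sub_add_nbrSum_eq_zero (i.removeNth x)
  rw [hlift, nbrSum_comp_removeNth]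
  linarith

end Bitrades

theorem stmt13_general (q m : ℕ) [NeZero q] (hq : 3 ≤ q)
    (Tp Tm : Set (HV (m + 1) q))
    (h : projBitrade Tp Tm) :
    ∃ g h' : HV (m + 1) q → ℝ,
      (∀ x, chi Tp x - chi Tm x = g x + h' x) ∧
      (∀ x, nbrSum g x = -((m + 1 : ℕ) : ℝ) * g x) ∧
      (∀ x, nbrSum h' x = ((q : ℝ) - 2) * h' x) := by
  set f : HV (m + 1) q → ℝ := fun y => chi Tp y - chi Tm y
  set A := nbrSumLinear (m + 1) q
  have hsum : A f - (-((m + 1 : ℕ) : ℝ)) • f = ∑ i, lineSum i f := by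
    funext x
    simp only [A, nbrSumLinear, LinearMap.coe_mk, AddHom.coe_mk, Pi.sub_apply, Pi.smul_apply,
      smul_eq_mul, Finset.sum_apply, nbrSum_eq_sum_lineSum_sub]
    ring
  have hne : -((m + 1 : ℕ) : ℝ) ≠ (q : ℝ) - 2 := by
    have : (3 : ℝ) ≤ q := by exact_mod_cast hq
    have : (0 : ℝ) ≤ m := m.cast_nonneg
    push_cast
    linarith
  obtain ⟨g, h', hf, hg, hh⟩ := A.exists_add_eigenvectors hne (v := f) (by
    rw [hsum, map_sum, Finset.smul_sum]
    exact Finset.sum_congr rfl fun i _ => funext (h.nbrSum_lineSum i))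
  exact ⟨g, h', fun x => congrFun hf x, fun x => congrFun hg x, fun x => congrFun hh x⟩

/-- here `n = m + 1 ≥ 2`: the projection definition (Definition 2) implies
the spectral decomposition of Definition 4: `χ₊ - χ₋ = g + h` with `Ag = -n·g` and
`Ah = (q-2)·h`. -/
theorem stmt13 (q m : ℕ) [NeZero q] (hq : 3 ≤ q) (hm : 1 ≤ m)
    (Tp Tm : Set (HV (m + 1) q)) (hdisj : Disjoint Tp Tm)
    (h : projBitrade Tp Tm) :
    ∃ g h' : HV (m + 1) q → ℝ,
      (∀ x, chi Tp x - chi Tm x = g x + h' x) ∧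
      (∀ x, nbrSum g x = -((m + 1 : ℕ) : ℝ) * g x) ∧
      (∀ x, nbrSum h' x = ((q : ℝ) - 2) * h' x) :=
  stmt13_general q m hq Tp Tm h
end

section
/- Let q ≥ 3 and n ≥ 2. If a pair (T⁺, T⁻) of disjoint subsets of V(H(n,q)) satisfies the cylinder definition of extended perfect bitrade (Definition 5), i.e., |C_{x,i} ∩ T⁺| = |C_{x,i} ∩ T⁻| ≤ 1 for every vertex x and every coordinate i, then it satisfies the projection definition (Definition 2): T⁺ and T⁻ have code distance at least 4 and every i-projection of (T⁺, T⁻) is a perfect bitrade in H(n−1,q). -/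
open Finset

/-!
A word `z` lies in the cylinder `C_{x,i}` exactly when deleting coordinate `i` brings `z` within
distance 1 of `x` with coordinate `i` deleted. So deleting coordinate `i` maps `C_{x,i} ∩ T` onto
`B(x') ∩ proj_i T`, where `x'` is `x` without coordinate `i`, injectively once the intersection has
at most one element: the ball counts of the projections are the cylinder counts, and the
projections of `T⁺` and `T⁻` have equally many points in each ball, which survives removing their
common part. Two codewords at distance at most 3 differ in some coordinate `i`; deleting it leaves
words at distance at most 2, which have a common neighbour, so both codewords lie in one cylinder.
-/

section Hamming

variable {m : ℕ} {β : Fin (m + 1) → Type*} [∀ j, DecidableEq (β j)]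

theorem hammingDist_eq_hammingDist_removeNth_add (i : Fin (m + 1)) (u v : ∀ j, β j) :
    hammingDist u v =
      hammingDist (i.removeNth u) (i.removeNth v) + if u i = v i then 0 else 1 := by
  simp only [hammingDist, Finset.card_filter]
  rw [Fin.sum_univ_succAbove _ i, add_comm]
  simp only [ne_eq, ite_not]
  rfl

end Hamming

section Midpoint

variable {ι : Type*} [Fintype ι] [DecidableEq ι] {β : ι → Type*} [∀ j, DecidableEq (β j)]

theorem hammingDist_update_le_one (a : ∀ j, β j) (j : ι) (c : β j) :
    hammingDist (Function.update a j c) a ≤ 1 := by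
  have hj : ∀ k, Function.update a j c k ≠ a k → k = j := fun k hk =>
    by_contra fun hkj => hk (Function.update_of_ne hkj c a)
  refine Finset.card_le_one.2 fun k hk l hl => ?_
  simp only [Finset.mem_filter, Finset.mem_univ, true_and] at hk hl
  exact (hj k hk).trans (hj l hl).symm

theorem hammingDist_update_of_ne_s14 {a b : ∀ j, β j} {j : ι} (h : a j ≠ b j) :
    hammingDist (Function.update a j (b j)) b = hammingDist a b - 1 := by
  have : (Finset.univ.filter fun k => Function.update a j (b j) k ≠ b k) =
      (Finset.univ.filter fun k => a k ≠ b k).erase j := by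
    ext k
    rcases eq_or_ne k j with rfl | hkj <;> simp [*]
  rw [hammingDist, this, Finset.card_erase_of_mem (by simpa using h), hammingDist]

theorem exists_hammingDist_le_one_of_hammingDist_le_two {a b : ∀ j, β j}
    (h : hammingDist a b ≤ 2) : ∃ x, hammingDist x a ≤ 1 ∧ hammingDist x b ≤ 1 := by
  rcases eq_or_ne a b with rfl | hne
  · exact ⟨a, by simp⟩
  obtain ⟨j, hj⟩ := Function.ne_iff.1 hne
  refine ⟨Function.update a j (b j), hammingDist_update_le_one a j _, ?_⟩
  rw [hammingDist_update_of_ne_s14 hj]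
  omega

end Midpoint

section Cylinder

variable {m q : ℕ}

theorem mem_cylinder_iff {x z : HV (m + 1) q} {i : Fin (m + 1)} :
    z ∈ cylinder x i ↔ hammingDist (i.removeNth x) (i.removeNth z) ≤ 1 := by
  simp only [cylinder, hBall, Set.mem_iUnion, Set.mem_ofPred_eq]
  constructor
  · rintro ⟨a, ha⟩
    rw [hammingDist_eq_hammingDist_removeNth_add i, Fin.removeNth_update] at ha
    omega
  · intro hle
    refine ⟨z i - x i, ?_⟩
    rw [hammingDist_eq_hammingDist_removeNth_add i, Fin.removeNth_update]
    simpa using hle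

theorem minDistGe_four_of_ncard_cylinder_inter_le_one [NeZero q] {T : Set (HV (m + 1) q)}
    (hT : ∀ x i, (cylinder x i ∩ T).ncard ≤ 1) : minDistGe T 4 := by
  intro u hu v hv huv
  by_contra! hlt
  obtain ⟨i, hi⟩ := Function.ne_iff.1 huv
  have hdist := hammingDist_eq_hammingDist_removeNth_add i u v
  rw [if_neg hi] at hdist
  obtain ⟨x, hxu, hxv⟩ :=
    exists_hammingDist_le_one_of_hammingDist_le_two (a := i.removeNth u) (b := i.removeNth v)
      (by omega)
  have hmem : ∀ w, hammingDist x (i.removeNth w) ≤ 1 → w ∈ cylinder (i.insertNth 0 x) i := by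
    intro w hw
    rwa [mem_cylinder_iff, Fin.removeNth_insertNth]
  exact huv <| ((Set.ncard_le_one).1 (hT (i.insertNth 0 x) i)) u ⟨hmem u hxu, hu⟩ v ⟨hmem v hxv, hv⟩

theorem hBall_inter_proj (i : Fin (m + 1)) (T : Set (HV (m + 1) q)) (x : HV m q) :
    hBall x ∩ proj i T = i.removeNth '' (cylinder (i.insertNth 0 x) i ∩ T) := by
  ext y
  constructor
  · rintro ⟨hy, a, ha⟩
    refine ⟨i.insertNth a y, ⟨mem_cylinder_iff.2 ?_, ha⟩, Fin.removeNth_insertNth _ _ _⟩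
    simpa [hBall] using hy
  · rintro ⟨z, ⟨hz, hzT⟩, rfl⟩
    refine ⟨?_, z i, by rwa [Fin.insertNth_self_removeNth]⟩
    simpa [hBall, mem_cylinder_iff] using hz

theorem ncard_hBall_inter_proj [NeZero q] {i : Fin (m + 1)} {T : Set (HV (m + 1) q)}
    {x : HV m q} (h : (cylinder (i.insertNth 0 x) i ∩ T).ncard ≤ 1) :
    (hBall x ∩ proj i T).ncard = (cylinder (i.insertNth 0 x) i ∩ T).ncard := by
  rw [hBall_inter_proj]
  exact ((Set.ncard_le_one_iff_subsingleton.1 h).injOn _).ncard_image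

end Cylinder

theorem isPerfectBitrade_sdiff {n q : ℕ} [NeZero q] {A B : Set (HV n q)}
    (h : ∀ x, (hBall x ∩ A).ncard = (hBall x ∩ B).ncard ∧ (hBall x ∩ A).ncard ≤ 1) :
    isPerfectBitrade (A \ B) (B \ A) := by
  refine ⟨disjoint_sdiff_sdiff, fun x => ?_⟩
  obtain ⟨heq, hle⟩ := h x
  rw [Set.inter_sdiff_distrib_left, Set.inter_sdiff_distrib_left]
  exact ⟨(Set.ncard_eq_ncard_iff_ncard_sdiff_eq_ncard_sdiff).1 heq,
    (Set.ncard_le_ncard Set.sdiff_subset).trans hle⟩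

theorem stmt14_general (q m : ℕ) (hq : 3 ≤ q)
    (Tp Tm : Set (HV (m + 1) q))
    (h : cylBitrade Tp Tm) :
    projBitrade Tp Tm := by
  have : NeZero q := ⟨by omega⟩
  refine ⟨minDistGe_four_of_ncard_cylinder_inter_le_one fun x i => (h x i).2,
    minDistGe_four_of_ncard_cylinder_inter_le_one fun x i => (h x i).1 ▸ (h x i).2,
    fun i => isPerfectBitrade_sdiff fun x => ?_⟩
  obtain ⟨heq, hle⟩ := h (i.insertNth 0 x) i
  rw [ncard_hBall_inter_proj hle, ncard_hBall_inter_proj (heq ▸ hle)]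
  exact ⟨heq, hle⟩

/-- here `n = m + 1 ≥ 2`: the cylinder definition (Definition 5) implies
the projection definition (Definition 2). -/
theorem stmt14 (q m : ℕ) (hq : 3 ≤ q) (hm : 1 ≤ m)
    (Tp Tm : Set (HV (m + 1) q)) (hdisj : Disjoint Tp Tm)
    (h : cylBitrade Tp Tm) :
    projBitrade Tp Tm :=
  stmt14_general q m hq Tp Tm h
end
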